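/- Under the equivalence relation on S_n generated by replacing a factor of three adjacent letters whose order pattern lies in {123, 132, 312} by a rearrangement forming another pattern in {123, 132, 312}, the value of the smallest letter positioned strictly to the right of the letter 1 is invariant (and it exists in one permutation iff it exists in any equivalent permutation). -/

import Mathlib

/-- A pattern of length 3, given as a relation on the three letter values. -/
abbrev Pat : Type := ℕ → ℕ → ℕ → Prop

def p123 : Pat := fun a b c => a < b ∧ b < c
def p132 : Pat := fun a b c => a < c ∧ c < b
def p213 : Pat := fun a b c => b < a ∧ a < c
def p231 : Pat := fun a b c => c < a ∧ a < b
def p312 : Pat := fun a b c => b < c ∧ c < a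
def p321 : Pat := fun a b c => c < b ∧ b < a

/-- The factor of `w` at positions `i, i+1, i+2` has order pattern `p`. -/
def PatAt {n : ℕ} (w : Equiv.Perm (Fin n)) (i : ℕ) (h : i + 3 ≤ n) (p : Pat) : Prop :=
  p (w ⟨i, by omega⟩).val (w ⟨i + 1, by omega⟩).val (w ⟨i + 2, by omega⟩).val

/-- One replacement move: a factor of three adjacent letters whose pattern lies in some
part `Q` of the replacement partition is rearranged (same letters, all other positions
unchanged) into a factor whose pattern also lies in `Q`. -/
def Step3 {n : ℕ} (parts : Set (Set Pat)) (w w' : Equiv.Perm (Fin n)) : Prop :=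
  ∃ Q ∈ parts, ∃ i : ℕ, ∃ h : i + 3 ≤ n,
    (∀ j : Fin n, (j.val < i ∨ i + 3 ≤ j.val) → w j = w' j) ∧
    (∃ p ∈ Q, PatAt w i h p) ∧ (∃ q ∈ Q, PatAt w' i h q)

/-- The equivalence relation on `S_n` generated by the replacement moves. -/
def PattEquiv {n : ℕ} (parts : Set (Set Pat)) :
    Equiv.Perm (Fin n) → Equiv.Perm (Fin n) → Prop :=
  Relation.EqvGen (Step3 parts)

/-- The number of equivalence classes of `S_n` under the given replacement partition. -/
noncomputable def classCount (n : ℕ) (parts : Set (Set Pat)) : ℕ :=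
  Nat.card (Quotient (Setoid.mk (PattEquiv (n := n) parts)
    (Relation.EqvGen.is_equivalence _)))

/-- `w` avoids every pattern in `P` as a consecutive pattern. -/
def AvoidsAll {n : ℕ} (w : Equiv.Perm (Fin n)) (P : Set Pat) : Prop :=
  ∀ (i : ℕ) (h : i + 3 ≤ n), ∀ p ∈ P, ¬ PatAt w i h p

/-- A V-permutation: the letters strictly decrease until the letter `1`
(the smallest value, `0` in `Fin n`) and then strictly increase. -/
def IsVPerm {n : ℕ} (w : Equiv.Perm (Fin n)) : Prop :=
  ∃ i : Fin n, w i = ⟨0, i.pos⟩ ∧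
    (∀ j k : Fin n, j < k → k ≤ i → w k < w j) ∧
    (∀ j k : Fin n, i ≤ j → j < k → w j < w k)

/-- Motzkin path: steps U=1, F=0, D=-1, partial sums nonnegative, total sum 0. -/
def IsMotzkinPath (l : List ℤ) : Prop :=
  (∀ x ∈ l, x = 1 ∨ x = 0 ∨ x = -1) ∧ (∀ k : ℕ, 0 ≤ (l.take k).sum) ∧ l.sum = 0

/-- The `n`-th Motzkin number: the number of Motzkin paths of length `n`. -/
noncomputable def motzkin (n : ℕ) : ℕ :=
  Nat.card {l : List ℤ // l.length = n ∧ IsMotzkinPath l}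

/-!
A move rewrites three adjacent positions. If the letter `1` (here `0`) is outside them, the
whole block lies on one side of it and the set of letters to the right of `1` does not change.
If `1` is inside, then in each of `123`, `132`, `312` it is the smallest letter of the block and
the second smallest, `x`, stands to its right. So `x` is to the right of `1` before and after
the move, and the two sets of letters to the right of `1` differ only by block letters, all of
which are at least `x`: the two sets agree below `x`, hence have the same least element.
-/

theorem isLeast_inter_Iic_iff {α : Type*} [LinearOrder α] {s : Set α} {x v : α} (hx : x ∈ s) :
    IsLeast (s ∩ Set.Iic x) v ↔ IsLeast s v := by
  refine ⟨fun ⟨⟨hvs, hvx⟩, hv⟩ => ⟨hvs, fun u hu => ?_⟩,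
    fun ⟨hvs, hv⟩ => ⟨⟨hvs, hv hx⟩, fun u hu => hv hu.1⟩⟩
  rcases le_total u x with hux | hxu
  · exact hv ⟨hu, hux⟩
  · exact hvx.trans hxu

theorem isLeast_congr_of_inter_Iic_eq {α : Type*} [LinearOrder α] {s t : Set α} {x v : α}
    (hxs : x ∈ s) (hxt : x ∈ t) (hst : s ∩ Set.Iic x = t ∩ Set.Iic x) :
    IsLeast s v ↔ IsLeast t v := by
  rw [← isLeast_inter_Iic_iff hxs, hst, isLeast_inter_Iic_iff hxt]

namespace Equiv.Perm

variable {n : ℕ}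

def lettersRightOf (w : Equiv.Perm (Fin n)) (z : Fin n) : Set (Fin n) :=
  {u | w.symm z < w.symm u}

def blockLetters (w : Equiv.Perm (Fin n)) (i k : ℕ) : Set (Fin n) :=
  {u | i ≤ (w.symm u).val ∧ (w.symm u).val < i + k}

section Block

variable {w w' : Equiv.Perm (Fin n)} {i k : ℕ}

theorem symm_apply_eq_of_not_mem_blockLetters
    (hout : ∀ j : Fin n, (j.val < i ∨ i + k ≤ j.val) → w j = w' j) {u : Fin n}
    (hu : u ∉ w.blockLetters i k) : w'.symm u = w.symm u := by
  have hu' : (w.symm u).val < i ∨ i + k ≤ (w.symm u).val := by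
    simp only [blockLetters, Set.mem_ofPred_eq] at hu
    omega
  rw [Equiv.symm_apply_eq, ← hout _ hu', Equiv.apply_symm_apply]

theorem blockLetters_subset
    (hout : ∀ j : Fin n, (j.val < i ∨ i + k ≤ j.val) → w j = w' j) :
    w.blockLetters i k ⊆ w'.blockLetters i k := by
  intro u hu
  by_contra hu'
  have hpos := symm_apply_eq_of_not_mem_blockLetters (fun j hj => (hout j hj).symm) hu'
  exact hu' (by simpa only [blockLetters, Set.mem_ofPred_eq, hpos] using hu)

theorem blockLetters_eq (hout : ∀ j : Fin n, (j.val < i ∨ i + k ≤ j.val) → w j = w' j) :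
    w.blockLetters i k = w'.blockLetters i k :=
  (blockLetters_subset hout).antisymm (blockLetters_subset fun j hj => (hout j hj).symm)

theorem mem_lettersRightOf_iff_of_not_mem_blockLetters
    (hout : ∀ j : Fin n, (j.val < i ∨ i + k ≤ j.val) → w j = w' j) (z : Fin n) {u : Fin n}
    (hu : u ∉ w.blockLetters i k) :
    u ∈ w.lettersRightOf z ↔ u ∈ w'.lettersRightOf z := by
  simp only [lettersRightOf, Set.mem_ofPred_eq, symm_apply_eq_of_not_mem_blockLetters hout hu]
  by_cases hz : z ∈ w.blockLetters i k
  · have hz' := blockLetters_subset hout hz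
    simp only [blockLetters, Set.mem_ofPred_eq] at hu hz hz'
    simp only [Fin.lt_def]
    omega
  · rw [symm_apply_eq_of_not_mem_blockLetters hout hz]

theorem lettersRightOf_eq_of_not_mem_blockLetters
    (hout : ∀ j : Fin n, (j.val < i ∨ i + k ≤ j.val) → w j = w' j) {z : Fin n}
    (hz : z ∉ w.blockLetters i k) :
    w.lettersRightOf z = w'.lettersRightOf z := by
  ext u
  by_cases hu : u ∈ w.blockLetters i k
  · have hu' := blockLetters_subset hout hu
    simp only [lettersRightOf, blockLetters, Set.mem_ofPred_eq, Fin.lt_def,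
      symm_apply_eq_of_not_mem_blockLetters hout hz] at hu hu' hz ⊢
    omega
  · exact mem_lettersRightOf_iff_of_not_mem_blockLetters hout z hu

end Block

theorem mem_blockLetters_three_iff {w : Equiv.Perm (Fin n)} {i : ℕ} (h : i + 3 ≤ n)
    (u : Fin n) :
    u ∈ w.blockLetters i 3 ↔
      u = w ⟨i, by omega⟩ ∨ u = w ⟨i + 1, by omega⟩ ∨ u = w ⟨i + 2, by omega⟩ := by
  simp only [blockLetters, Set.mem_ofPred_eq, ← Equiv.symm_apply_eq, Fin.ext_iff]
  omega

theorem exists_isLeast_blockLetters_diff_mem_lettersRightOf {w : Equiv.Perm (Fin n)} {i : ℕ}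
    (h : i + 3 ≤ n) {p : Pat} (hp : p ∈ ({p123, p132, p312} : Set Pat)) (hpat : PatAt w i h p)
    {z : Fin n} (hz0 : z.val = 0) (hz : z ∈ w.blockLetters i 3) :
    ∃ x, IsLeast (w.blockLetters i 3 \ {z}) x ∧ x ∈ w.lettersRightOf z := by
  rw [mem_blockLetters_three_iff h] at hz
  simp only [Set.mem_insert_iff, Set.mem_singleton_iff] at hp
  unfold PatAt at hpat
  rcases hp with rfl | rfl | rfl <;> simp only [p123, p132, p312] at hpat <;>
    rcases hz with rfl | rfl | rfl <;> try omega
  -- the second smallest letter of the block, at position `i + 1` for `123` and `i + 2` otherwise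
  on_goal 1 => refine ⟨w ⟨i + 1, by omega⟩, ?_⟩
  on_goal 2 => refine ⟨w ⟨i + 2, by omega⟩, ?_⟩
  on_goal 3 => refine ⟨w ⟨i + 2, by omega⟩, ?_⟩
  all_goals
    refine ⟨⟨⟨(mem_blockLetters_three_iff h _).2 (by simp), w.injective.ne (by simp)⟩,
      ?_⟩, by simp [lettersRightOf, Fin.lt_def]⟩
    rintro u ⟨hu, huz⟩
    rw [mem_blockLetters_three_iff h] at hu
    rcases hu with rfl | rfl | rfl <;>
      simp only [Set.mem_singleton_iff, Fin.ext_iff, Fin.le_def, not_true_eq_false] at huz ⊢ <;>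
      omega

theorem isLeast_lettersRightOf_iff_of_step {w w' : Equiv.Perm (Fin n)}
    (hs : Step3 {({p123, p132, p312} : Set Pat)} w w') {z : Fin n} (hz0 : z.val = 0)
    (v : Fin n) :
    IsLeast (w.lettersRightOf z) v ↔ IsLeast (w'.lettersRightOf z) v := by
  obtain ⟨Q, hQ, i, h, hout, ⟨p, hp, hpat⟩, ⟨q, hq, hqat⟩⟩ := hs
  obtain rfl := Set.mem_singleton_iff.1 hQ
  by_cases hz : z ∉ w.blockLetters i 3
  · rw [lettersRightOf_eq_of_not_mem_blockLetters hout hz]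
  rw [not_not] at hz
  have hblock := blockLetters_eq hout
  obtain ⟨x, hx, hxw⟩ := exists_isLeast_blockLetters_diff_mem_lettersRightOf h hp hpat hz0 hz
  obtain ⟨x', hx', hxw'⟩ :=
    exists_isLeast_blockLetters_diff_mem_lettersRightOf h hq hqat hz0 (hblock ▸ hz)
  obtain rfl : x = x' := (hblock ▸ hx).unique hx'
  refine isLeast_congr_of_inter_Iic_eq hxw hxw' (Set.ext fun u => and_congr_left fun hux => ?_)
  by_cases hu : u ∉ w.blockLetters i 3
  · exact mem_lettersRightOf_iff_of_not_mem_blockLetters hout z hu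
  obtain rfl | rfl : u = z ∨ u = x := by
    by_contra! hne
    exact hne.2 (le_antisymm hux (hx.2 ⟨not_not.1 hu, hne.1⟩))
  · exact iff_of_false (lt_irrefl (w.symm u)) (lt_irrefl (w'.symm u))
  · exact iff_of_true hxw hxw'

end Equiv.Perm

/-- under the `{123, 132, 312}`-equivalence, the smallest letter strictly to
the right of the letter `1` is invariant (including its existence). -/
theorem stmt7 (n : ℕ) (hn : 1 ≤ n) (w w' : Equiv.Perm (Fin n))
    (h : PattEquiv {({p123, p132, p312} : Set Pat)} w w') :
    ∀ v : Fin n,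
      IsLeast {u : Fin n | w.symm ⟨0, by omega⟩ < w.symm u} v ↔
        IsLeast {u : Fin n | w'.symm ⟨0, by omega⟩ < w'.symm u} v := by
  intro v
  induction h with
  | rel _ _ hstep => exact Equiv.Perm.isLeast_lettersRightOf_iff_of_step hstep rfl v
  | refl => exact Iff.rfl
  | symm _ _ _ ih => exact ih.symm
  | trans _ _ _ _ _ ih₁ ih₂ => exact ih₁.trans ih₂
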